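/- Let E0 > 0 and fix ω > E0. There exist γ0 > 0 and μ0 > 0 such that for all γ ∈ (0, γ0) and μ ∈ (0, μ0) for which the cubic f(P) = P(P−1)² + αP − β has three distinct real roots P1 < P2 < P3, the function D_P with P = P2 (the middle root) has a zero s ∈ ℂ with Re s > 0. (Linear instability of the harmonic solution with intermediate response.) -/

import Mathlib

/-- Principal complex square root (branch cut on the negative real axis,
`√r > 0` for `r > 0`). -/
noncomputable def csqrt (z : ℂ) : ℂ := z ^ ((1:ℂ)/2)

/-- `S₋(z) = e^{iπ/4} √(-iz)`: square root with branch cut on the negative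
imaginary axis. -/
noncomputable def Sminus (z : ℂ) : ℂ :=
  Complex.exp (Complex.I * Real.pi / 4) * csqrt (-Complex.I * z)

/-- `S₊(z) = e^{-iπ/4} √(iz)`: square root with branch cut on the positive
imaginary axis. -/
noncomputable def Splus (z : ℂ) : ℂ :=
  Complex.exp (-Complex.I * Real.pi / 4) * csqrt (Complex.I * z)

/-- `p̂(s) = 1/(ω + is + 2i S₋(ω + is))`. -/
noncomputable def phat (ω : ℝ) (s : ℂ) : ℂ :=
  1 / ((ω : ℂ) + Complex.I * s + 2 * Complex.I * Sminus ((ω : ℂ) + Complex.I * s))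

/-- `q̂(s) = 1/(ω - is - 2i S₊(ω - is))`. -/
noncomputable def qhat (ω : ℝ) (s : ℂ) : ℂ :=
  1 / ((ω : ℂ) - Complex.I * s - 2 * Complex.I * Splus ((ω : ℂ) - Complex.I * s))

/-- `σ = ω - E0 - γ²/(ω+4)`. -/
noncomputable def sigmaPar (E0 γ ω : ℝ) : ℝ := ω - E0 - γ^2 / (ω + 4)

/-- The stability determinant
`D_P(s) = 3σ²P² - 4σP(ω - E0 - (γ²/2)(p̂ + q̂)) + (ω - E0 - is - γ²q̂)(ω - E0 + is - γ²p̂)`. -/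
noncomputable def Dfun (E0 γ ω P : ℝ) (s : ℂ) : ℂ :=
  3 * (sigmaPar E0 γ ω : ℂ)^2 * (P : ℂ)^2
    - 4 * (sigmaPar E0 γ ω : ℂ) * (P : ℂ) *
        (((ω - E0 : ℝ) : ℂ) - ((γ : ℂ)^2 / 2) * (phat ω s + qhat ω s))
    + (((ω - E0 : ℝ) : ℂ) - Complex.I * s - (γ : ℂ)^2 * qhat ω s) *
      (((ω - E0 : ℝ) : ℂ) + Complex.I * s - (γ : ℂ)^2 * phat ω s)

/-- `α(ω; γ, E0) = 4γ⁴/(ω σ² ρ²)`. -/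
noncomputable def alphaPar (E0 γ ω : ℝ) : ℝ :=
  4 * γ^4 / (ω * (sigmaPar E0 γ ω)^2 * (ω + 4)^2)

/-- `β(ω; γ, μ, E0) = 4γ²μ/(σ³ ρ)`. -/
noncomputable def betaPar (E0 γ μ ω : ℝ) : ℝ :=
  4 * γ^2 * μ / ((sigmaPar E0 γ ω)^3 * (ω + 4))

/-- The cubic polynomial `f(P) = P(P-1)² + αP - β`. -/
noncomputable def cubicF (α β P : ℝ) : ℝ := P * (P - 1)^2 + α * P - β

/-!
On the real axis `q̂ = conj p̂` (the two square roots are conjugate off their cuts), so `D_P`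
is real there. At `s = 0` one has `p̂ + q̂ = 2/ρ` and `p̂ q̂ = 1/(ωρ)`, which turns `D_P(0)`
into `σ² f'(P)`; at the middle root of `f` the slope `f'` is negative. Along the positive
reals `p̂` stays bounded, so the term `|ω - E0 + is - γ² p̂|²` eventually dominates and `D_P`
becomes positive. The intermediate value theorem then gives a zero on the positive real axis.
-/

open Complex ComplexConjugate
open scoped Real

lemma csqrt_sq (z : ℂ) : csqrt z ^ 2 = z := by
  rcases eq_or_ne z 0 with rfl | hz
  · simp [csqrt]
  · rw [csqrt, sq, ← cpow_add _ _ hz]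
    norm_num

lemma Sminus_sq (z : ℂ) : Sminus z ^ 2 = z := by
  rw [Sminus, mul_pow, csqrt_sq, ← exp_nat_mul,
    show ((2 : ℕ) : ℂ) * (I * π / 4) = π / 2 * I by push_cast; ring, exp_pi_div_two_mul_I,
    ← mul_assoc, mul_neg, I_mul_I, neg_neg, one_mul]

lemma conj_Sminus {z : ℂ} (hz : z.re ≠ 0) : conj (Sminus z) = Splus (conj z) := by
  have harg : (-I * z).arg ≠ π := fun h ↦ hz (by simpa using (arg_eq_pi_iff.mp h).2)
  have hexp : conj (exp (I * π / 4)) = exp (-I * π / 4) := by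
    rw [← exp_conj]; simp [map_div₀, map_ofNat]
  have hcpow := conj_cpow (-I * z) (1 / 2) harg
  simp only [map_div₀, map_one, map_ofNat] at hcpow
  rw [Sminus, Splus, map_mul, hexp, csqrt, csqrt, ← hcpow]
  simp

section

variable {ω : ℝ}

lemma Sminus_mul_add_two_I (s : ℂ) :
    Sminus (ω + I * s) * (Sminus (ω + I * s) + 2 * I)
      = ω + I * s + 2 * I * Sminus (ω + I * s) := by
  linear_combination Sminus_sq ((ω : ℂ) + I * s)

/-- Only `w ^ 2 = z` enters: `‖w‖ ≥ √(re z)` and `‖w + 2i‖ ‖w - 2i‖ = ‖z + 4‖ ≥ re z + 4`. -/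
lemma norm_mul_add_two_I_lower_bound {w : ℂ} (hw : 0 < (w ^ 2).re) :
    √(w ^ 2).re * ((w ^ 2).re + 4) ≤ (√(w ^ 2).re + 2) * ‖w * (w + 2 * I)‖ := by
  set r := (w ^ 2).re
  have hr : √r ^ 2 = r := Real.sq_sqrt hw.le
  have ha : √r ≤ ‖w‖ := by
    rw [← Real.sqrt_sq (norm_nonneg w), ← norm_pow]
    exact Real.sqrt_le_sqrt (re_le_norm _)
  have hb : r + 4 ≤ ‖w + 2 * I‖ * (‖w‖ + 2) := calc
    r + 4 = (w ^ 2 + 4).re := by simp [r]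
    _ ≤ ‖(w + 2 * I) * (w - 2 * I)‖ := by
      rw [show (w + 2 * I) * (w - 2 * I) = w ^ 2 + 4 by linear_combination (-4) * I_sq]
      exact re_le_norm _
    _ ≤ ‖w + 2 * I‖ * (‖w‖ + 2) := by
      rw [norm_mul]
      gcongr
      exact (norm_sub_le _ _).trans (by simp)
  rw [norm_mul]
  nlinarith [norm_nonneg (w + 2 * I), Real.sqrt_nonneg r]

lemma phat_denom_lower_bound (hω : 0 < ω) (s : ℝ) :
    √ω * (ω + 4) ≤ (√ω + 2) * ‖(ω : ℂ) + I * s + 2 * I * Sminus (ω + I * s)‖ := by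
  have hre : ((ω : ℂ) + I * s).re = ω := by simp
  have h := norm_mul_add_two_I_lower_bound (w := Sminus (ω + I * s))
    (by rwa [Sminus_sq, hre])
  rwa [Sminus_mul_add_two_I, Sminus_sq, hre] at h

lemma phat_denom_ne_zero (hω : 0 < ω) (s : ℝ) :
    (ω : ℂ) + I * s + 2 * I * Sminus (ω + I * s) ≠ 0 := by
  intro h
  have := phat_denom_lower_bound hω s
  rw [h, norm_zero, mul_zero] at this
  have : 0 < √ω * (ω + 4) := by positivity
  linarith

lemma norm_phat_ofReal_le (hω : 0 < ω) (s : ℝ) :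
    ‖phat ω s‖ ≤ (√ω + 2) / (√ω * (ω + 4)) := by
  rw [phat, norm_div, norm_one, div_le_div_iff₀ (norm_pos_iff.mpr (phat_denom_ne_zero hω s))
    (by positivity), one_mul]
  exact phat_denom_lower_bound hω s

lemma continuous_phat_ofReal (hω : 0 < ω) : Continuous fun s : ℝ ↦ phat ω s := by
  have hslit (s : ℝ) : -I * (ω + I * s) ∈ slitPlane := by
    rw [mem_slitPlane_iff]
    right
    simpa using hω.ne'
  have hS : Continuous fun s : ℝ ↦ Sminus (ω + I * s) :=
    continuous_const.mul ((by fun_prop : Continuous fun s : ℝ ↦ -I * (ω + I * s)).cpow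
      continuous_const fun s ↦ hslit s)
  exact continuous_const.div (by fun_prop) (phat_denom_ne_zero hω)

lemma conj_phat_ofReal (hω : ω ≠ 0) (s : ℝ) : conj (phat ω s) = qhat ω s := by
  have hz : conj ((ω : ℂ) + I * s) = ω - I * s := by simp [sub_eq_add_neg]
  rw [phat, qhat, map_div₀, map_one, map_add, map_mul, map_mul,
    conj_Sminus (by simpa using hω), hz]
  simp [sub_eq_add_neg, map_ofNat]

lemma exists_phat_zero_qhat_zero (hω : 0 < ω) : ∃ c : ℝ, c ^ 2 = ω ∧
    phat ω 0 = 1 / (ω + 2 * I * c) ∧ qhat ω 0 = 1 / (ω - 2 * I * c) := by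
  have hsq : Sminus ω ^ 2 = (√ω : ℂ) ^ 2 := by
    rw [Sminus_sq, ← ofReal_pow, Real.sq_sqrt hω.le]
  obtain ⟨c, hc, hc2⟩ : ∃ c : ℝ, Sminus ω = c ∧ c ^ 2 = ω := by
    rcases sq_eq_sq_iff_eq_or_eq_neg.mp hsq with h | h
    · exact ⟨√ω, h, Real.sq_sqrt hω.le⟩
    · exact ⟨-√ω, by rw [h, ofReal_neg], by rw [neg_sq, Real.sq_sqrt hω.le]⟩
  have hp : phat ω 0 = 1 / (ω + 2 * I * c) := by
    rw [phat, mul_zero, add_zero, hc]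
  refine ⟨c, hc2, hp, ?_⟩
  rw [← ofReal_zero, ← conj_phat_ofReal hω.ne', ofReal_zero, hp]
  simp [map_ofNat, sub_eq_add_neg]

end

section

variable {E0 γ ω P : ℝ}

lemma Dfun_ofReal (hω : ω ≠ 0) (s : ℝ) :
    Dfun E0 γ ω P s = ((3 * sigmaPar E0 γ ω ^ 2 * P ^ 2
      - 4 * sigmaPar E0 γ ω * P * (ω - E0 - γ ^ 2 * (phat ω s).re)
      + normSq (ω - E0 + I * s - γ ^ 2 * phat ω s) : ℝ) : ℂ) := by
  have hq : qhat ω s = conj (phat ω s) := (conj_phat_ofReal hω s).symm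
  have hconj : ((ω - E0 : ℝ) : ℂ) - I * s - γ ^ 2 * qhat ω s
      = conj ((ω - E0 : ℝ) + I * s - γ ^ 2 * phat ω s) := by
    rw [hq]
    simp [sub_eq_add_neg]
  rw [Dfun, hconj, ← normSq_eq_conj_mul_self, hq, add_conj]
  push_cast
  ring

lemma exists_re_Dfun_ofReal_pos (hω : 0 < ω) :
    ∃ T : ℝ, 0 < T ∧ 0 < (Dfun E0 γ ω P T).re := by
  set C := (√ω + 2) / (√ω * (ω + 4))
  set B := |ω - E0| + γ ^ 2 * C
  set M := 4 * |sigmaPar E0 γ ω * P| * B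
  have hC : 0 ≤ C := by positivity
  have hB : 0 ≤ B := by positivity
  have hM : 0 ≤ M := by positivity
  refine ⟨B + M + 1, by linarith, ?_⟩
  set T := B + M + 1
  set p := phat ω T
  have hp : ‖p‖ ≤ C := norm_phat_ofReal_le hω T
  have hγp : ‖(γ : ℂ) ^ 2 * p‖ ≤ γ ^ 2 * C := by
    rw [norm_mul, norm_pow, norm_real, Real.norm_eq_abs, sq_abs]
    gcongr
  have hlin : |ω - E0 - γ ^ 2 * p.re| ≤ B := by
    refine (abs_sub _ _).trans ?_
    rw [abs_mul, abs_of_nonneg (sq_nonneg γ)]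
    exact add_le_add_right (mul_le_mul_of_nonneg_left ((abs_re_le_norm p).trans hp)
      (sq_nonneg γ)) _
  have hquad : M + 1 ≤ ‖(ω - E0 : ℂ) + I * T - γ ^ 2 * p‖ := by
    have h := norm_sub_norm_le (I * T) (γ ^ 2 * p - (ω - E0 : ℂ))
    rw [norm_mul, norm_I, norm_real, Real.norm_eq_abs, abs_of_pos (by linarith : 0 < T),
      one_mul, show I * T - (γ ^ 2 * p - (ω - E0 : ℂ)) = (ω - E0 : ℂ) + I * T - γ ^ 2 * p by ring]
      at h
    have h' : ‖(γ : ℂ) ^ 2 * p - (ω - E0 : ℂ)‖ ≤ B := by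
      refine (norm_sub_le _ _).trans ?_
      rw [← ofReal_sub, norm_real, Real.norm_eq_abs]
      linarith
    linarith
  rw [Dfun_ofReal hω.ne', ofReal_re, normSq_eq_norm_sq]
  have hM : 4 * sigmaPar E0 γ ω * P * (ω - E0 - γ ^ 2 * p.re) ≤ M := by
    refine (le_abs_self _).trans ?_
    rw [mul_assoc 4, abs_mul, abs_mul, abs_of_pos four_pos]
    exact mul_le_mul_of_nonneg_left hlin (by positivity)
  nlinarith [norm_nonneg ((ω - E0 : ℂ) + I * T - γ ^ 2 * p), sq_nonneg (sigmaPar E0 γ ω * P)]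

lemma Dfun_zero (hω : 0 < ω) (hσ : sigmaPar E0 γ ω ≠ 0) :
    Dfun E0 γ ω P 0 = (sigmaPar E0 γ ω ^ 2 * (3 * P ^ 2 - 4 * P + 1 + alphaPar E0 γ ω) : ℝ) := by
  obtain ⟨c, hc2, hp, hq⟩ := exists_phat_zero_qhat_zero hω
  have hc : (c : ℂ) ^ 2 = ω := by exact_mod_cast hc2
  have hplus : (ω : ℂ) + 2 * I * c ≠ 0 := fun h ↦ by simpa [hω.ne'] using congrArg re h
  have hminus : (ω : ℂ) - 2 * I * c ≠ 0 := fun h ↦ by simpa [hω.ne'] using congrArg re h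
  have hω' : (ω : ℂ) ≠ 0 := ofReal_ne_zero.mpr hω.ne'
  have hρ : (ω : ℂ) + 4 ≠ 0 := by exact_mod_cast (by linarith : ω + 4 ≠ 0)
  have hsum : phat ω 0 + qhat ω 0 = 2 / (ω + 4) := by
    rw [hp, hq, div_add_div _ _ hplus hminus, div_eq_div_iff (mul_ne_zero hplus hminus) hρ]
    linear_combination (-8) * hc + 8 * (c : ℂ) ^ 2 * I_sq
  have hprod : phat ω 0 * qhat ω 0 = 1 / (ω * (ω + 4)) := by
    rw [hp, hq, div_mul_div_comm, one_mul,
      div_eq_div_iff (mul_ne_zero hplus hminus) (mul_ne_zero hω' hρ)]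
    linear_combination (-4) * hc + 4 * (c : ℂ) ^ 2 * I_sq
  have hα : sigmaPar E0 γ ω ^ 2 * alphaPar E0 γ ω = 4 * γ ^ 4 / (ω * (ω + 4) ^ 2) := by
    rw [alphaPar]
    field_simp
  have hD : Dfun E0 γ ω P 0 = 3 * sigmaPar E0 γ ω ^ 2 * P ^ 2
      - 4 * sigmaPar E0 γ ω * P * ((ω - E0 : ℝ) - (γ ^ 2 / 2) * (phat ω 0 + qhat ω 0))
      + ((ω - E0 : ℝ) ^ 2 - (ω - E0 : ℝ) * γ ^ 2 * (phat ω 0 + qhat ω 0)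
        + γ ^ 4 * (phat ω 0 * qhat ω 0)) := by
    rw [Dfun, mul_zero, sub_zero, add_zero]
    ring
  rw [hD, hsum, hprod, mul_add (sigmaPar E0 γ ω ^ 2), hα]
  simp only [sigmaPar]
  push_cast
  field_simp
  ring

/-- `3P² - 4P + 1 + α` is the slope `f'(P)` of the cubic. -/
lemma cubicF_slope_neg_of_middle_root {α β P1 P2 P3 : ℝ} (h12 : P1 < P2) (h23 : P2 < P3)
    (e1 : cubicF α β P1 = 0) (e2 : cubicF α β P2 = 0) (e3 : cubicF α β P3 = 0) :
    3 * P2 ^ 2 - 4 * P2 + 1 + α < 0 := by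
  rw [cubicF] at e1 e2 e3
  have hQ12 : P1 ^ 2 + P1 * P2 + P2 ^ 2 - 2 * P1 - 2 * P2 + 1 + α = 0 := by
    refine (mul_eq_zero.mp ?_).resolve_left (sub_ne_zero.mpr h12.ne')
    linear_combination e2 - e1
  have hQ23 : P2 ^ 2 + P2 * P3 + P3 ^ 2 - 2 * P2 - 2 * P3 + 1 + α = 0 := by
    refine (mul_eq_zero.mp ?_).resolve_left (sub_ne_zero.mpr h23.ne')
    linear_combination e3 - e2
  have hvieta : P1 + P2 + P3 - 2 = 0 := by
    refine (mul_eq_zero.mp ?_).resolve_left (sub_ne_zero.mpr (h12.trans h23).ne)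
    linear_combination hQ12 - hQ23
  have hslope : 3 * P2 ^ 2 - 4 * P2 + 1 + α = (P2 - P1) * (P2 - P3) := by
    linear_combination hQ12 + (P2 - P1) * hvieta
  rw [hslope]
  exact mul_neg_of_pos_of_neg (sub_pos.mpr h12) (sub_neg.mpr h23)

lemma sigmaPar_pos (hω : 0 < ω) (hγ : γ ^ 2 < (ω - E0) * (ω + 4)) : 0 < sigmaPar E0 γ ω := by
  rw [sigmaPar, sub_pos, div_lt_iff₀ (by linarith)]
  exact hγ

lemma exists_pos_zero_Dfun_of_re_neg (hω : 0 < ω) (h0 : (Dfun E0 γ ω P 0).re < 0) :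
    ∃ s : ℝ, 0 < s ∧ Dfun E0 γ ω P s = 0 := by
  obtain ⟨T, hT, hDT⟩ := exists_re_Dfun_ofReal_pos (E0 := E0) (γ := γ) (P := P) hω
  have hcont : Continuous fun s : ℝ ↦ (Dfun E0 γ ω P s).re := by
    simp_rw [Dfun_ofReal hω.ne', ofReal_re]
    have hp := continuous_phat_ofReal hω
    fun_prop
  rw [← ofReal_zero] at h0
  obtain ⟨s, hs, hDs⟩ := intermediate_value_Ioo hT.le hcont.continuousOn ⟨h0, hDT⟩
  refine ⟨s, hs.1, Complex.ext hDs ?_⟩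
  rw [Dfun_ofReal hω.ne', ofReal_im, zero_im]

end

/-- linear instability of the harmonic solution with intermediate
response: if the cubic `f` has three distinct real roots `P1 < P2 < P3` and
`γ, μ` are small, then `D_{P2}` has a zero with positive real part. -/
theorem intermediate_response_linearly_unstable
    (E0 ω : ℝ) (hE0 : 0 < E0) (hω : E0 < ω) :
    ∃ γ0 > 0, ∃ μ0 > 0, ∀ γ : ℝ, 0 < γ → γ < γ0 → ∀ μ : ℝ, 0 < μ → μ < μ0 →
      ∀ P1 P2 P3 : ℝ, P1 < P2 → P2 < P3 →
        cubicF (alphaPar E0 γ ω) (betaPar E0 γ μ ω) P1 = 0 →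
        cubicF (alphaPar E0 γ ω) (betaPar E0 γ μ ω) P2 = 0 →
        cubicF (alphaPar E0 γ ω) (betaPar E0 γ μ ω) P3 = 0 →
        ∃ s : ℂ, 0 < s.re ∧ Dfun E0 γ ω P2 s = 0 := by
  have hω0 : 0 < ω := hE0.trans hω
  refine ⟨√((ω - E0) * (ω + 4)), Real.sqrt_pos.mpr (by nlinarith), 1, one_pos, ?_⟩
  intro γ hγ hγ0 μ _ _ P1 P2 P3 h12 h23 e1 e2 e3
  have hσ := sigmaPar_pos hω0 ((Real.lt_sqrt hγ.le).mp hγ0)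
  have hD0 : (Dfun E0 γ ω P2 0).re < 0 := by
    rw [Dfun_zero hω0 hσ.ne', ofReal_re]
    exact mul_neg_of_pos_of_neg (by positivity) (cubicF_slope_neg_of_middle_root h12 h23 e1 e2 e3)
  obtain ⟨s, hs, hDs⟩ := exists_pos_zero_Dfun_of_re_neg hω0 hD0
  exact ⟨s, by rwa [ofReal_re], hDs⟩
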